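/- arXiv:2501.07205 — 2 statements merged into one kernel-verified Lean document; each statement's English description precedes it below -/
import Mathlib

section
/- Suppose σ > 1. Then the point e_T = (0, b(σ)(σ−1)) is an equilibrium of the planar dynamical system (DS): m' = i·m(1−m), i' = δ⁻¹f(m,i), and the Jacobian matrix of the vector field at e_T is lower triangular with diagonal entries b(σ)(σ−1) > 0 and −a(σ)b(σ)(σ−1)/(δ(α₂b(σ)(σ−1) + β₂)) < 0; in particular the Jacobian has one strictly positive and one strictly negative real eigenvalue, so e_T is a hyperbolic saddle point. -/
noncomputable def sigmaP (α₂ β₁ β₂ : ℝ) : ℝ := α₂ / (β₁ * β₂)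

noncomputable def aP (α₂ β₁ β₂ : ℝ) : ℝ := β₁ * (β₂ * sigmaP α₂ β₁ β₂ + α₂)

noncomputable def bP (α₂ β₁ β₂ : ℝ) : ℝ := β₂ / (β₂ * sigmaP α₂ β₁ β₂ + α₂)

/-- The reduced reaction function `f(M,I)`. -/
noncomputable def fP (α₂ β₁ β₂ M I : ℝ) : ℝ :=
  aP α₂ β₁ β₂ * I * (bP α₂ β₁ β₂ * (sigmaP α₂ β₁ β₂ - 1) + bP α₂ β₁ β₂ * M - I) /
    (α₂ * I + β₂ * (1 - M))

/-!
On the invariant line `m = 0` the first component vanishes identically and the second is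
`i ↦ δ⁻¹ a i (i_T - i) / (α₂ i + β₂)`, whose numerator has a simple root at `i_T = b(σ-1)`.
So `e_T` is an equilibrium, `∂g₁/∂i = 0` there, and the quotient rule at a root of the
numerator gives `∂g₂/∂i = -δ⁻¹ a i_T / (α₂ i_T + β₂)`; along `m`, `g₁` is logistic with
slope `i_T` at `m = 0`.
-/

theorem HasDerivAt.div_of_apply_eq_zero {𝕜 : Type*} [NontriviallyNormedField 𝕜]
    {u v : 𝕜 → 𝕜} {u' v' x : 𝕜} (hu : HasDerivAt u u' x) (hv : HasDerivAt v v' x)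
    (hux : u x = 0) (hvx : v x ≠ 0) :
    HasDerivAt (fun y => u y / v y) (u' / v x) x :=
  (hu.div hv hvx).congr_deriv (by field_simp; rw [hux]; ring)

theorem hasDerivAt_mul_mul_sub {𝕜 : Type*} [NontriviallyNormedField 𝕜] (c K x : 𝕜) :
    HasDerivAt (fun y => c * y * (K - y)) (c * (K - 2 * x)) x :=
  (((hasDerivAt_id' x).const_mul c).mul ((hasDerivAt_id' x).const_sub K)).congr_deriv (by ring)

theorem hasDerivAt_mul_mul_sub_div_at_root {𝕜 : Type*} [NontriviallyNormedField 𝕜]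
    (c K α β : 𝕜) (hD : α * K + β ≠ 0) :
    HasDerivAt (fun y => c * y * (K - y) / (α * y + β)) (-(c * K) / (α * K + β)) K := by
  have hnum := (hasDerivAt_mul_mul_sub c K K).congr_deriv (show c * (K - 2 * K) = -(c * K) by ring)
  have hden := ((hasDerivAt_id K).const_mul α).add_const β
  exact hnum.div_of_apply_eq_zero hden (by ring) hD

theorem fP_zero_left (α₂ β₁ β₂ i : ℝ) :
    fP α₂ β₁ β₂ 0 i =
      aP α₂ β₁ β₂ * i * (bP α₂ β₁ β₂ * (sigmaP α₂ β₁ β₂ - 1) - i) / (α₂ * i + β₂) := by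
  simp only [fP, mul_zero, add_zero, sub_zero, mul_one]

section Positivity

variable {α₂ β₁ β₂ : ℝ}

theorem pos_of_one_lt_sigmaP (hβ₁ : 0 < β₁) (hβ₂ : 0 < β₂) (hσ : 1 < sigmaP α₂ β₁ β₂) :
    0 < α₂ := by
  have hβ : 0 < β₁ * β₂ := mul_pos hβ₁ hβ₂
  have : β₁ * β₂ < α₂ := by rwa [sigmaP, one_lt_div hβ] at hσ
  linarith

theorem bP_pos (hα₂ : 0 ≤ α₂) (hβ₂ : 0 < β₂) (hσ : 0 < sigmaP α₂ β₁ β₂) :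
    0 < bP α₂ β₁ β₂ := by
  unfold bP
  positivity

theorem aP_pos (hα₂ : 0 ≤ α₂) (hβ₁ : 0 < β₁) (hβ₂ : 0 < β₂) (hσ : 0 < sigmaP α₂ β₁ β₂) :
    0 < aP α₂ β₁ β₂ := by
  unfold aP
  positivity

end Positivity

theorem eT_hyperbolic_saddle_general (α₂ β₁ β₂ δ : ℝ)
    (hβ₁ : 0 < β₁) (hβ₂ : 0 < β₂) (hδ : 0 < δ)
    (hσ : 1 < sigmaP α₂ β₁ β₂) :
    let σ := sigmaP α₂ β₁ β₂
    let a := aP α₂ β₁ β₂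
    let b := bP α₂ β₁ β₂
    let g₁ : ℝ → ℝ → ℝ := fun m i => i * m * (1 - m)
    let g₂ : ℝ → ℝ → ℝ := fun m i => δ⁻¹ * fP α₂ β₁ β₂ m i
    let iT := b * (σ - 1)
    -- e_T is an equilibrium
    g₁ 0 iT = 0 ∧ g₂ 0 iT = 0 ∧
    -- the Jacobian at e_T is lower triangular: ∂g₁/∂i = 0 there
    HasDerivAt (fun i => g₁ 0 i) 0 iT ∧
    -- diagonal entries of the Jacobian at e_T
    HasDerivAt (fun m => g₁ m iT) (b * (σ - 1)) 0 ∧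
    HasDerivAt (fun i => g₂ 0 i) (-(a * b * (σ - 1) / (δ * (α₂ * b * (σ - 1) + β₂)))) iT ∧
    -- one strictly positive and one strictly negative real eigenvalue
    (0 < b * (σ - 1)) ∧ (-(a * b * (σ - 1) / (δ * (α₂ * b * (σ - 1) + β₂))) < 0) := by
  intro σ a b g₁ g₂ iT
  have hα₂ : 0 < α₂ := pos_of_one_lt_sigmaP hβ₁ hβ₂ hσ
  have hσ₀ : 0 < σ := one_pos.trans hσ
  have ha : 0 < a := aP_pos hα₂.le hβ₁ hβ₂ hσ₀
  have hb : 0 < b := bP_pos hα₂.le hβ₂ hσ₀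
  have hσ₁ : 0 < σ - 1 := sub_pos.mpr hσ
  have hg₂ : (fun i => g₂ 0 i) = fun i => δ⁻¹ * (a * i * (iT - i) / (α₂ * i + β₂)) := by
    funext i
    exact congrArg (δ⁻¹ * ·) (fP_zero_left α₂ β₁ β₂ i)
  refine ⟨by simp [g₁], by simp [hg₂], by simpa [g₁] using hasDerivAt_const iT (0 : ℝ),
    ?_, ?_, by positivity, neg_neg_of_pos (by positivity)⟩
  · simpa [iT] using hasDerivAt_mul_mul_sub iT 1 0
  · rw [hg₂]
    refine ((hasDerivAt_mul_mul_sub_div_at_root a iT α₂ β₂ (by positivity)).const_mul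
      δ⁻¹).congr_deriv ?_
    rw [mul_comm δ, ← div_div]
    ring

/-- For `σ > 1`, the point `e_T = (0, b(σ)(σ-1))` is an equilibrium of the planar system
(DS) `m' = i m (1-m)`, `i' = δ⁻¹ f(m,i)`; the Jacobian there is lower triangular with
diagonal entries `b(σ)(σ-1) > 0` and `-a(σ)b(σ)(σ-1)/(δ(α₂ b(σ)(σ-1) + β₂)) < 0`, so
`e_T` is a hyperbolic saddle point. -/
theorem eT_hyperbolic_saddle (α₂ β₁ β₂ δ : ℝ)
    (hα₂ : 0 < α₂) (hβ₁ : 0 < β₁) (hβ₂ : 0 < β₂) (hδ : 0 < δ)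
    (hσ : 1 < sigmaP α₂ β₁ β₂) :
    let σ := sigmaP α₂ β₁ β₂
    let a := aP α₂ β₁ β₂
    let b := bP α₂ β₁ β₂
    let g₁ : ℝ → ℝ → ℝ := fun m i => i * m * (1 - m)
    let g₂ : ℝ → ℝ → ℝ := fun m i => δ⁻¹ * fP α₂ β₁ β₂ m i
    let iT := b * (σ - 1)
    -- e_T is an equilibrium
    g₁ 0 iT = 0 ∧ g₂ 0 iT = 0 ∧
    -- the Jacobian at e_T is lower triangular: ∂g₁/∂i = 0 there
    HasDerivAt (fun i => g₁ 0 i) 0 iT ∧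
    -- diagonal entries of the Jacobian at e_T
    HasDerivAt (fun m => g₁ m iT) (b * (σ - 1)) 0 ∧
    HasDerivAt (fun i => g₂ 0 i) (-(a * b * (σ - 1) / (δ * (α₂ * b * (σ - 1) + β₂)))) iT ∧
    -- one strictly positive and one strictly negative real eigenvalue
    (0 < b * (σ - 1)) ∧ (-(a * b * (σ - 1) / (δ * (α₂ * b * (σ - 1) + β₂))) < 0) :=
  eT_hyperbolic_saddle_general α₂ β₁ β₂ δ hβ₁ hβ₂ hδ hσ
end

section
/- (Proposition 4.2) Let 0 < δ ≤ σ ≤ 1 and let (M_T, I_T) be an FPTW with speed v > 0. Then M_T(z) < 1 and I_T(z) < b(σ)σ for all z ∈ ℝ. -/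
/-- A full transition permanent form travelling wave ([FPTW]) with speed `v`:
a pair of C² profiles with values in `[0,1]²`, satisfying the travelling-wave ODEs
`M'' + v M' + I M (1 - M) = 0` and `δ (D I'' + v I') + f(M, I) = 0`, connecting
the fully saturated state `(1, b(σ)σ)` at `-∞` to the zero state `(0,0)` at `+∞`. -/
structure IsFPTW (α₂ β₁ β₂ δ D v : ℝ) (M I : ℝ → ℝ) : Prop where
  smoothM : ContDiff ℝ 2 M
  smoothI : ContDiff ℝ 2 I
  rangeM : ∀ z, M z ∈ Set.Icc (0 : ℝ) 1
  rangeI : ∀ z, I z ∈ Set.Icc (0 : ℝ) 1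
  odeM : ∀ z, deriv (deriv M) z + v * deriv M z + I z * M z * (1 - M z) = 0
  odeI : ∀ z, δ * (D * deriv (deriv I) z + v * deriv I z) + fP α₂ β₁ β₂ (M z) (I z) = 0
  limM_top : Filter.Tendsto M Filter.atTop (nhds 0)
  limI_top : Filter.Tendsto I Filter.atTop (nhds 0)
  limM_bot : Filter.Tendsto M Filter.atBot (nhds 1)
  limI_bot : Filter.Tendsto I Filter.atBot (nhds (bP α₂ β₁ β₂ * sigmaP α₂ β₁ β₂))

/-!
If `M` touched `1` at some point, `u = 1 - M` would solve the linear equation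
`u'' + v u' = (I M) u` with `u = u' = 0` there, so Grönwall's inequality for `(u, u')`
makes `u` vanish to the right of that point, contradicting `M → 0` at `+∞`.
If `I` reached `b(σ)σ`, then, since `I` tends to `b(σ)σ` and `0` at `∓∞`, it attains a
global maximum `≥ b(σ)σ`; there `I' = 0` and `I'' ≤ 0`, so the second equation forces
`f(M, I) ≥ 0`, whereas `f(M, I) < 0` as soon as `M < 1` and `I ≥ b(σ)σ`.
-/

open Filter Topology Set

theorem IsLocalMax.deriv_deriv_nonpos {f : ℝ → ℝ} {a : ℝ} (h : IsLocalMax f a)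
    (hf : ContinuousAt f a) : deriv (deriv f) a ≤ 0 := by
  by_contra! hpos
  have hmin := isLocalMin_of_deriv_deriv_pos hpos h.deriv_eq_zero hf
  have hconst : f =ᶠ[𝓝 a] fun _ => f a := by
    filter_upwards [h, hmin] with x hle hge using le_antisymm hle hge
  have hzero : deriv (deriv f) a = 0 := by
    rw [hconst.deriv.deriv_eq]
    simp
  exact hpos.ne' hzero

theorem Continuous.exists_forall_ge_of_tendsto_atBot_atTop {f : ℝ → ℝ} (hf : Continuous f)
    {a b x₀ : ℝ} (ha : Tendsto f atBot (𝓝 a)) (hb : Tendsto f atTop (𝓝 b))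
    (hx₀ : max a b ≤ f x₀) : ∃ x, max a b ≤ f x ∧ ∀ y, f y ≤ f x := by
  by_cases hgt : ∃ x₁, max a b < f x₁
  · obtain ⟨x₁, hx₁⟩ := hgt
    have hbelow : ∀ᶠ y in cocompact ℝ, f y ≤ f x₁ := by
      rw [cocompact_eq_atBot_atTop, eventually_sup]
      exact ⟨(ha.eventually_lt_const ((le_max_left a b).trans_lt hx₁)).mono fun _ => le_of_lt,
        (hb.eventually_lt_const ((le_max_right a b).trans_lt hx₁)).mono fun _ => le_of_lt⟩
    obtain ⟨x, hx⟩ := hf.exists_forall_ge' x₁ hbelow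
    exact ⟨x, hx₁.le.trans (hx x₁), hx⟩
  · push Not at hgt
    exact ⟨x₀, hx₀, fun y => (hgt y).trans hx₀⟩

theorem eqOn_zero_of_deriv_deriv_add_mul_deriv_eq_mul {u q : ℝ → ℝ} {v Q a : ℝ}
    (hu : Differentiable ℝ u) (hu' : Differentiable ℝ (deriv u))
    (hode : ∀ z, deriv (deriv u) z + v * deriv u z = q z * u z) (hq : ∀ z, |q z| ≤ Q)
    (h₀ : u a = 0) (h₁ : deriv u a = 0) : EqOn u 0 (Ici a) := by
  intro b hb
  have hQ : 0 ≤ Q := (abs_nonneg _).trans (hq a)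
  have hphase : ∀ z ∈ Icc a b, (u z, deriv u z) = 0 := by
    refine eq_zero_of_abs_deriv_le_mul_abs_self_of_eq_zero_right
      (f' := fun z => (deriv u z, deriv (deriv u) z)) (K := 1 + |v| + Q)
      (hu.continuous.prodMk hu'.continuous).continuousOn
      (fun z _ => ((hu z).hasDerivAt.prodMk (hu' z).hasDerivAt).hasDerivWithinAt)
      (by simp [h₀, h₁]) fun z _ => ?_
    simp only [Prod.norm_mk, Real.norm_eq_abs]
    set m := max |u z| |deriv u z|
    have hm : 0 ≤ m := (abs_nonneg _).trans (le_max_left _ _)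
    refine max_le (by nlinarith [le_max_right |u z| |deriv u z|, abs_nonneg v]) ?_
    calc |deriv (deriv u) z| = |q z * u z - v * deriv u z| := by rw [← hode z]; ring_nf
      _ ≤ |q z| * |u z| + |v| * |deriv u z| := by
        rw [← abs_mul, ← abs_mul]; exact abs_sub _ _
      _ ≤ Q * m + |v| * m := by
        gcongr
        exacts [hq z, le_max_left _ _, le_max_right _ _]
      _ ≤ (1 + |v| + Q) * m := by nlinarith
  exact congrArg Prod.fst (hphase b ⟨hb, le_rfl⟩)

theorem fP_neg {α₂ β₁ β₂ M I : ℝ} (hα₂ : 0 < α₂) (hβ₁ : 0 < β₁) (hβ₂ : 0 < β₂) (hM : M < 1)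
    (hI : bP α₂ β₁ β₂ * sigmaP α₂ β₁ β₂ ≤ I) : fP α₂ β₁ β₂ M I < 0 := by
  have hσ : 0 < sigmaP α₂ β₁ β₂ := div_pos hα₂ (mul_pos hβ₁ hβ₂)
  have hb : 0 < bP α₂ β₁ β₂ := div_pos hβ₂ (by positivity)
  have ha : 0 < aP α₂ β₁ β₂ := mul_pos hβ₁ (by positivity)
  have hIpos : 0 < I := (mul_pos hb hσ).trans_le hI
  have hM' : 0 < 1 - M := sub_pos.2 hM
  refine div_neg_of_neg_of_pos (mul_neg_of_pos_of_neg (mul_pos ha hIpos) ?_) (by positivity)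
  nlinarith [mul_pos hb hM']

namespace IsFPTW

variable {α₂ β₁ β₂ δ D v : ℝ} {M I : ℝ → ℝ}

theorem M_lt_one (h : IsFPTW α₂ β₁ β₂ δ D v M I) (z : ℝ) : M z < 1 := by
  by_contra! hz
  have hmax : IsLocalMax M z := Eventually.of_forall fun y => (h.rangeM y).2.trans hz
  have hu' : deriv (fun y => 1 - M y) = -deriv M := funext fun _ => deriv_const_sub 1
  have hzero : EqOn (fun y => 1 - M y) 0 (Ici z) := by
    refine eqOn_zero_of_deriv_deriv_add_mul_deriv_eq_mul (q := fun y => I y * M y) (v := v)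
      (Q := 1) ((differentiable_const 1).sub (h.smoothM.differentiable (by norm_num)))
      (hu' ▸ h.smoothM.differentiable_deriv_two.neg) (fun y => ?_) (fun y => ?_)
      (by linarith [(h.rangeM z).2]) (by simp [hu', hmax.deriv_eq_zero])
    · rw [hu', deriv.neg, Pi.neg_apply]
      linarith [h.odeM y]
    · obtain ⟨hI₀, hI₁⟩ := h.rangeI y
      obtain ⟨hM₀, hM₁⟩ := h.rangeM y
      rw [abs_of_nonneg (mul_nonneg hI₀ hM₀)]
      exact mul_le_one₀ hI₁ hM₀ hM₁
  have hone : Tendsto M atTop (𝓝 1) := by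
    refine tendsto_const_nhds.congr' ?_
    filter_upwards [eventually_ge_atTop z] with y hy
    have hy' : 1 - M y = 0 := hzero (mem_Ici.2 hy)
    linarith
  exact zero_ne_one (tendsto_nhds_unique h.limM_top hone)

end IsFPTW

theorem fptw_upper_bounds_general (α₂ β₁ β₂ δ D v : ℝ)
    (hα₂ : 0 < α₂) (hβ₁ : 0 < β₁) (hβ₂ : 0 < β₂) (hD : 0 < D)
    (hδ : 0 < δ) (M I : ℝ → ℝ) (h : IsFPTW α₂ β₁ β₂ δ D v M I) :
    ∀ z : ℝ, M z < 1 ∧ I z < bP α₂ β₁ β₂ * sigmaP α₂ β₁ β₂ := by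
  intro z
  refine ⟨h.M_lt_one z, ?_⟩
  by_contra! hz
  obtain ⟨zs, hzs, hmax⟩ := h.smoothI.continuous.exists_forall_ge_of_tendsto_atBot_atTop
    h.limI_bot h.limI_top (max_le hz (h.rangeI z).1)
  have hloc : IsLocalMax I zs := Eventually.of_forall hmax
  have hI'' := hloc.deriv_deriv_nonpos h.smoothI.continuous.continuousAt
  have hf : 0 ≤ fP α₂ β₁ β₂ (M zs) (I zs) := by
    have hode := h.odeI zs
    rw [hloc.deriv_eq_zero] at hode
    nlinarith [mul_nonneg (mul_nonneg hδ.le hD.le) (neg_nonneg.2 hI'')]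
  exact hf.not_gt (fP_neg hα₂ hβ₁ hβ₂ (h.M_lt_one zs) ((le_max_left _ _).trans hzs))

/-- Proposition 4.2: an [FPTW] satisfies `M_T < 1` and `I_T < b(σ)σ` everywhere. -/
theorem fptw_upper_bounds (α₂ β₁ β₂ δ D v : ℝ)
    (hα₂ : 0 < α₂) (hβ₁ : 0 < β₁) (hβ₂ : 0 < β₂) (hD : 0 < D)
    (hδ : 0 < δ) (hδσ : δ ≤ sigmaP α₂ β₁ β₂) (hσ : sigmaP α₂ β₁ β₂ ≤ 1)
    (hv : 0 < v) (M I : ℝ → ℝ) (h : IsFPTW α₂ β₁ β₂ δ D v M I) :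
    ∀ z : ℝ, M z < 1 ∧ I z < bP α₂ β₁ β₂ * sigmaP α₂ β₁ β₂ :=
  fptw_upper_bounds_general α₂ β₁ β₂ δ D v hα₂ hβ₁ hβ₂ hD hδ M I h
end
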